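/- For every odd k ≥ 3, the independence number of the de Bruijn graph satisfies lim_{d→∞} α(d,k)/dᵏ = (k−1)/(2k). -/

import Mathlib

open Filter

/-- Adjacency in the de Bruijn graph `B(d,k)`. -/
def deBruijnAdj (d k : ℕ) (hk : 2 ≤ k) (u v : Fin k → Fin d) : Prop :=
  ∀ i : Fin (k - 1), u ⟨i.1 + 1, by omega⟩ = v ⟨i.1, by omega⟩

/-- The independence number of `B(d,k)`. -/
noncomputable def deBruijnIndep (d k : ℕ) (hk : 2 ≤ k) : ℕ :=
  sSup {n : ℕ | ∃ S : Finset (Fin k → Fin d),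
    (∀ u ∈ S, ∀ v ∈ S, ¬ deBruijnAdj d k hk u v) ∧ S.card = n}

section Aux
open Finset Function


variable {V : Type*} [DecidableEq V]

lemma orbit_bound (k : ℕ) (hk : 0 < k) (hodd : Odd k) (r : V → V)
    (hinj : Function.Injective r) (hper : ∀ x, r^[k] x = x) :
    ∀ n (U : Finset V), U.card ≤ n → (∀ x ∈ U, r x ∈ U) →
      ∀ T ⊆ U, (∀ u ∈ T, r u ∉ T) → 2 * k * T.card ≤ (k - 1) * U.card := by
  intro n
  induction n with
  | zero =>
    intro U hU _ T hTU _
    have hUe : U = ∅ := Finset.card_eq_zero.mp (Nat.le_zero.mp hU)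
    subst hUe
    have hTe : T = ∅ := Finset.subset_empty.mp hTU
    simp [hTe]
  | succ n ih =>
    intro U hU hUcl T hTU hT
    rcases U.eq_empty_or_nonempty with rfl | ⟨x, hx⟩
    · have hTe : T = ∅ := Finset.subset_empty.mp hTU
      simp [hTe]
    classical
    -- the orbit of x
    set O : Finset V := (Finset.range k).image (fun n => r^[n] x) with hO
    have hxO : x ∈ O :=
      Finset.mem_image.mpr ⟨0, Finset.mem_range.mpr hk, rfl⟩
    have hiterU : ∀ m, r^[m] x ∈ U := by
      intro m
      induction m with
      | zero => simpa using hx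
      | succ m ihm => rw [Function.iterate_succ_apply']; exact hUcl _ ihm
    have hOU : O ⊆ U := by
      intro y hy
      rcases Finset.mem_image.mp hy with ⟨m, _, rfl⟩
      exact hiterU m
    -- minimal period
    have hPex : ∃ m, 0 < m ∧ r^[m] x = x := ⟨k, hk, hper x⟩
    set m := Nat.find hPex with hmdef
    have hm : 0 < m ∧ r^[m] x = x := Nat.find_spec hPex
    have hmin : ∀ l, l < m → ¬(0 < l ∧ r^[l] x = x) := fun l hl => Nat.find_min hPex hl
    have hmult : ∀ q, r^[m * q] x = x := by
      intro q
      induction q with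
      | zero => simp
      | succ q ihq =>
        rw [Nat.mul_succ, Function.iterate_add_apply, hm.2, ihq]
    have hmod : ∀ l, r^[l] x = r^[l % m] x := by
      intro l
      conv_lhs => rw [← Nat.div_add_mod l m]
      rw [Nat.add_comm, Function.iterate_add_apply, hmult]
    have hdvd : m ∣ k := by
      have h1 : r^[k % m] x = x := by rw [← hmod]; exact hper x
      rcases Nat.eq_zero_or_pos (k % m) with h | h
      · exact Nat.dvd_of_mod_eq_zero h
      · exact absurd ⟨h, h1⟩ (hmin _ (Nat.mod_lt _ hm.1))
    have hmk : m ≤ k := Nat.le_of_dvd hk hdvd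
    have hOm : O = (Finset.range m).image (fun n => r^[n] x) := by
      apply Finset.Subset.antisymm
      · intro y hy
        rcases Finset.mem_image.mp hy with ⟨l, _, rfl⟩
        exact Finset.mem_image.mpr ⟨l % m, Finset.mem_range.mpr (Nat.mod_lt _ hm.1), (hmod l).symm⟩
      · exact Finset.image_subset_image (Finset.range_subset_range.mpr hmk)
    have hinjm : Set.InjOn (fun n => r^[n] x) (Finset.range m) := by
      intro a ha b hb hab
      simp only [Finset.coe_range, Set.mem_Iio] at ha hb
      by_contra hne
      have key : ∀ a b : ℕ, a < b → b < m → r^[a] x = r^[b] x → False := by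
        intro a b hlt hbm hab
        have h2 : r^[a] (r^[b - a] x) = r^[a] x := by
          rw [← Function.iterate_add_apply]
          rw [show a + (b - a) = b by omega]
          exact hab.symm
        have hba : r^[b - a] x = x := (hinj.iterate a) h2
        exact hmin (b - a) (by omega) ⟨by omega, hba⟩
      rcases Nat.lt_or_ge a b with h | h
      · exact key a b h hb hab
      · exact key b a (by omega) ha hab.symm
    have hcardO : O.card = m := by
      rw [hOm, Finset.card_image_of_injOn hinjm, Finset.card_range]
    have hmodd : Odd m := by
      rcases hdvd with ⟨c, hc⟩
      exact (Nat.odd_mul.mp (hc ▸ hodd)).1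
    -- O is closed under r, and r maps O onto O
    have hOcl : ∀ y ∈ O, r y ∈ O := by
      intro y hy
      rcases Finset.mem_image.mp hy with ⟨l, _, rfl⟩
      have : r (r^[l] x) = r^[l + 1] x := (Function.iterate_succ_apply' r l x).symm
      rw [this, hmod]
      exact Finset.mem_image.mpr ⟨(l + 1) % m,
        Finset.mem_range.mpr (by exact lt_of_lt_of_le (Nat.mod_lt _ hm.1) hmk), rfl⟩
    have hrO : O.image r = O := by
      apply Finset.eq_of_subset_of_card_le
      · intro y hy
        rcases Finset.mem_image.mp hy with ⟨z, hz, rfl⟩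
        exact hOcl z hz
      · rw [Finset.card_image_of_injective _ hinj]
    have hrmemO : ∀ y, r y ∈ O → y ∈ O := by
      intro y hy
      rw [← hrO] at hy
      rcases Finset.mem_image.mp hy with ⟨z, hz, hzy⟩
      rwa [← hinj hzy]
    -- bound on T ∩ O
    have hTObound : 2 * (T ∩ O).card + 1 ≤ m := by
      have hdisj : Disjoint (T ∩ O) ((T ∩ O).image r) := by
        rw [Finset.disjoint_left]
        intro y hy hy'
        rcases Finset.mem_image.mp hy' with ⟨z, hz, rfl⟩
        exact hT z (Finset.mem_inter.mp hz).1 (Finset.mem_inter.mp hy).1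
      have hsub : (T ∩ O) ∪ (T ∩ O).image r ⊆ O := by
        apply Finset.union_subset
        · exact Finset.inter_subset_right
        · intro y hy
          rcases Finset.mem_image.mp hy with ⟨z, hz, rfl⟩
          exact hOcl z (Finset.mem_inter.mp hz).2
      have h2 : 2 * (T ∩ O).card ≤ m := by
        have := Finset.card_le_card hsub
        rw [Finset.card_union_of_disjoint hdisj,
          Finset.card_image_of_injective _ hinj, hcardO] at this
        omega
      rcases Nat.lt_or_ge (2 * (T ∩ O).card) m with h | h
      · omega
      · exfalso
        have : 2 * (T ∩ O).card = m := le_antisymm h2 h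
        rcases hmodd with ⟨j, hj⟩
        omega
    -- recurse on U \ O
    have hUO : ∀ y ∈ U \ O, r y ∈ U \ O := by
      intro y hy
      rcases Finset.mem_sdiff.mp hy with ⟨hyU, hyO⟩
      refine Finset.mem_sdiff.mpr ⟨hUcl y hyU, fun h => hyO (hrmemO y h)⟩
    have hcardU : (U \ O).card = U.card - m := by
      rw [Finset.card_sdiff_of_subset hOU, hcardO]
    have hmU : m ≤ U.card := hcardO ▸ Finset.card_le_card hOU
    have hUn : (U \ O).card ≤ n := by
      have : 0 < m := hm.1
      have := Finset.card_le_card hOU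
      omega
    have hrec := ih (U \ O) hUn hUO (T \ O) (by
      intro y hy
      rcases Finset.mem_sdiff.mp hy with ⟨hyT, hyO⟩
      exact Finset.mem_sdiff.mpr ⟨hTU hyT, hyO⟩) (by
      intro u hu
      intro hru
      exact hT u (Finset.mem_sdiff.mp hu).1 (Finset.mem_sdiff.mp hru).1)
    -- combine
    have hTsplit : T.card = (T ∩ O).card + (T \ O).card := by
      rw [Finset.card_inter_add_card_sdiff]
    rw [hTsplit, hcardU] at *
    have e1 : 2 * k * ((T ∩ O).card + (T \ O).card)
        = 2 * k * (T ∩ O).card + 2 * k * (T \ O).card := by ring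
    rw [e1]
    have e2 : 2 * k * (T ∩ O).card ≤ k * (m - 1) := by
      have : 2 * (T ∩ O).card ≤ m - 1 := by omega
      calc 2 * k * (T ∩ O).card = k * (2 * (T ∩ O).card) := by ring
        _ ≤ k * (m - 1) := Nat.mul_le_mul_left k this
    have e3 : k * (m - 1) + (k - 1) * (U.card - m) ≤ (k - 1) * U.card := by
      have h1 : (k - 1) * (U.card - m) = (k - 1) * U.card - (k - 1) * m := by
        rw [Nat.mul_sub]
      have h2 : k * (m - 1) = k * m - k := by rw [Nat.mul_sub, Nat.mul_one]
      have h3 : (k - 1) * m = k * m - m := by rw [Nat.sub_mul, Nat.one_mul]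
      have h4 : (k - 1) * m ≤ (k - 1) * U.card := Nat.mul_le_mul_left _ hmU
      have h5 : k * m ≥ k := Nat.le_mul_of_pos_right k hm.1
      have h6 : m ≤ k * m := Nat.le_mul_of_pos_left m hk
      omega
    omega

section Rot

variable {d k : ℕ}

def rot (hk : 0 < k) (w : Fin k → Fin d) : Fin k → Fin d :=
  haveI : NeZero k := ⟨by omega⟩
  fun i => w (i + 1)

lemma rot_inj (hk : 0 < k) : Function.Injective (rot (d := d) hk) := by
  haveI : NeZero k := ⟨by omega⟩
  intro w w' h
  funext i
  have := congrFun h (i - 1)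
  simpa [rot, sub_add_cancel] using this

open Fin.NatCast Fin.CommRing in
lemma rot_iterate (hk : 0 < k) [NeZero k] (w : Fin k → Fin d) (n : ℕ) :
    (rot hk)^[n] w = fun i => w (i + (n : Fin k)) := by
  induction n with
  | zero => simp
  | succ n ihn =>
    rw [Function.iterate_succ_apply', ihn]
    funext i
    simp only [rot]
    congr 1
    push_cast
    ring

open Fin.NatCast in
lemma rot_per (hk : 0 < k) (w : Fin k → Fin d) : (rot hk)^[k] w = w := by
  haveI : NeZero k := ⟨by omega⟩
  rw [rot_iterate hk]
  funext i
  simp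

lemma adj_rot (hk : 2 ≤ k) (w : Fin k → Fin d) :
    deBruijnAdj d k hk w (rot (by omega) w) := by
  haveI : NeZero k := ⟨by omega⟩
  intro i
  have hik : i.1 < k - 1 := i.2
  show w _ = w _
  congr 1
  apply Fin.ext
  rw [Fin.add_def, Fin.val_one']
  show i.1 + 1 = (i.1 + 1 % k) % k
  rw [Nat.mod_eq_of_lt (show 1 < k by omega), Nat.mod_eq_of_lt (by omega)]

lemma indep_card_le (hk3 : 3 ≤ k) (hodd : Odd k) (S : Finset (Fin k → Fin d))
    (hS : ∀ u ∈ S, ∀ v ∈ S, ¬ deBruijnAdj d k (Nat.le_of_succ_le hk3) u v) :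
    2 * k * S.card ≤ (k - 1) * d ^ k := by
  classical
  have hk : 0 < k := by omega
  have hbound := orbit_bound k hk hodd (rot (d := d) hk) (rot_inj hk) (rot_per hk)
    (Fintype.card (Fin k → Fin d)) Finset.univ (by simp) (by simp)
    S (Finset.subset_univ S) (by
      intro u hu hru
      exact hS u hu _ hru (adj_rot (by omega) u))
  simpa [Finset.card_univ] using hbound

end Rot

lemma card_cell {k d : ℕ} (i : Fin k) (q : Fin d) :
    (Finset.univ.filter (fun w : Fin k → Fin d => w i = q ∧ ∀ j, j ≠ i → q < w j)).card
      = (d - 1 - q.1) ^ (k - 1) := by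
  classical
  rw [← Fintype.card_subtype]
  have e : {w : Fin k → Fin d // w i = q ∧ ∀ j, j ≠ i → q < w j}
      ≃ ({j : Fin k // j ≠ i} → {v : Fin d // q < v}) :=
    { toFun := fun w j => ⟨w.1 j.1, w.2.2 j.1 j.2⟩
      invFun := fun f => ⟨fun j => if h : j = i then q else (f ⟨j, h⟩).1, by
        constructor
        · simp
        · intro j hj
          simpa [hj] using (f ⟨j, hj⟩).2⟩
      left_inv := by
        intro w
        apply Subtype.ext
        funext j
        by_cases h : j = i
        · subst h; simp [w.2.1]
        · simp [h]
      right_inv := by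
        intro f
        funext j
        apply Subtype.ext
        simp [j.2] }
  rw [Fintype.card_congr e, Fintype.card_fun]
  have h1 : Fintype.card {v : Fin d // q < v} = d - 1 - q.1 := by
    rw [Fintype.card_subtype]
    have : Finset.univ.filter (fun v : Fin d => q < v) = Finset.Ioi q := by
      ext v; simp
    rw [this, Fin.card_Ioi]
  have h2 : Fintype.card {j : Fin k // j ≠ i} = k - 1 := by
    rw [Fintype.card_subtype_compl, Fintype.card_subtype_eq, Fintype.card_fin]
  rw [h1, h2]

section LB

variable {d k : ℕ}

/-- The candidate independent set: strings with a unique minimum at an odd (0-indexed)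
position. -/
noncomputable def lowSet (d k : ℕ) : Finset (Fin k → Fin d) :=
  Finset.univ.filter (fun w => ∃ i : Fin k, Odd i.1 ∧ ∀ j, j ≠ i → w i < w j)

lemma lowSet_indep (hk3 : 3 ≤ k) (hodd : Odd k) :
    ∀ u ∈ lowSet d k, ∀ v ∈ lowSet d k, ¬ deBruijnAdj d k (Nat.le_of_succ_le hk3) u v := by
  intro u hu v hv hadj
  classical
  rcases (Finset.mem_filter.mp hu).2 with ⟨a, ha, hua⟩
  rcases (Finset.mem_filter.mp hv).2 with ⟨b, hb, hvb⟩
  -- k - 1 is even, so odd positions are < k - 1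
  have hbk : b.1 < k - 1 := by
    have := b.2
    rcases hodd with ⟨m, hm⟩
    rcases hb with ⟨j, hj⟩
    omega
  have hak : a.1 < k := a.2
  have ha1 : 1 ≤ a.1 := by rcases ha with ⟨m, hm⟩; omega
  -- u a < u ⟨b+1⟩ = v b
  have h1 : u a < v b := by
    have hne : (⟨b.1 + 1, by omega⟩ : Fin k) ≠ a := by
      intro h
      rcases ha with ⟨m, hm⟩
      rcases hb with ⟨j, hj⟩
      have := congrArg Fin.val h
      simp at this
      omega
    have := hua _ hne
    rwa [hadj ⟨b.1, hbk⟩] at this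
  -- v b < v ⟨a-1⟩ = u a
  have h2 : v b < u a := by
    have hane : (⟨a.1 - 1, by omega⟩ : Fin k) ≠ b := by
      intro h
      rcases ha with ⟨m, hm⟩
      rcases hb with ⟨j, hj⟩
      have := congrArg Fin.val h
      simp at this
      omega
    have hlt := hvb _ hane
    have heq := hadj ⟨a.1 - 1, by omega⟩
    have hval : (⟨a.1 - 1 + 1, by omega⟩ : Fin k) = a := by
      apply Fin.ext; simp; omega
    rw [hval] at heq
    rwa [← heq] at hlt
  exact absurd h2 (lt_asymm h1)

end LB

lemma odd_count : ∀ k : ℕ, ((Finset.range k).filter (fun t => Odd t)).card = k / 2 := by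
  intro k
  induction k with
  | zero => simp
  | succ k ih =>
    rw [Finset.range_add_one, Finset.filter_insert]
    by_cases h : Odd k
    · rw [if_pos h, Finset.card_insert_of_notMem (by simp), ih]
      rcases h with ⟨m, hm⟩
      omega
    · rw [if_neg h, ih]
      rw [Nat.not_odd_iff_even] at h
      rcases h with ⟨m, hm⟩
      omega

lemma pow_succ_le (n a : ℕ) : (a + 1) ^ (n + 1) ≤ a ^ (n + 1) + (n + 1) * (a + 1) ^ n := by
  induction n with
  | zero => simp
  | succ n ih =>
    have h1 : (a + 1) ^ (n + 2) = (a + 1) ^ (n + 1) * (a + 1) := by ring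
    have h2 : a ^ (n + 1) ≤ (a + 1) ^ (n + 1) := Nat.pow_le_pow_left (by omega) _
    calc (a + 1) ^ (n + 2) = (a + 1) ^ (n + 1) * (a + 1) := h1
      _ ≤ (a ^ (n + 1) + (n + 1) * (a + 1) ^ n) * (a + 1) := Nat.mul_le_mul_right _ ih
      _ = a ^ (n + 1) * a + a ^ (n + 1) + (n + 1) * ((a + 1) ^ n * (a + 1)) := by ring
      _ = a ^ (n + 2) + a ^ (n + 1) + (n + 1) * (a + 1) ^ (n + 1) := by ring
      _ ≤ a ^ (n + 2) + (a + 1) ^ (n + 1) + (n + 1) * (a + 1) ^ (n + 1) := by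
          omega
      _ = a ^ (n + 2) + (n + 2) * (a + 1) ^ (n + 1) := by ring

lemma sum_pow_ge (k : ℕ) (hk : 1 ≤ k) :
    ∀ d : ℕ, (d - 1) ^ k ≤ k * ∑ t ∈ Finset.range d, t ^ (k - 1) := by
  intro d
  induction d with
  | zero => simp [Nat.zero_pow hk]
  | succ d ih =>
    rw [Finset.sum_range_succ, Nat.mul_add, Nat.add_sub_cancel]
    rcases Nat.eq_zero_or_pos d with rfl | hd
    · simp [Nat.zero_pow hk]
    have key : d ^ k ≤ (d - 1) ^ k + k * d ^ (k - 1) := by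
      obtain ⟨a, rfl⟩ : ∃ a, d = a + 1 := ⟨d - 1, by omega⟩
      obtain ⟨n, rfl⟩ : ∃ n, k = n + 1 := ⟨k - 1, by omega⟩
      simpa using pow_succ_le n a
    omega

lemma lowSet_card_ge {d k : ℕ} (hk3 : 3 ≤ k) :
    (k / 2) * (∑ t ∈ Finset.range d, t ^ (k - 1)) ≤ (lowSet d k).card := by
  classical
  set C : Fin k × Fin d → Finset (Fin k → Fin d) := fun p =>
    Finset.univ.filter (fun w => w p.1 = p.2 ∧ ∀ j, j ≠ p.1 → p.2 < w j) with hC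
  set P : Finset (Fin k × Fin d) :=
    (Finset.univ.filter (fun i : Fin k => Odd i.1)) ×ˢ Finset.univ with hP
  have hdisj : ∀ p ∈ P, ∀ p' ∈ P, p ≠ p' → Disjoint (C p) (C p') := by
    intro p _ p' _ hne
    rw [Finset.disjoint_left]
    intro w hw hw'
    rcases (Finset.mem_filter.mp hw).2 with ⟨h1, h2⟩
    rcases (Finset.mem_filter.mp hw').2 with ⟨h1', h2'⟩
    by_cases hi : p.1 = p'.1
    · apply hne
      have : p.2 = p'.2 := by rw [← h1, hi, h1']
      exact Prod.ext hi this
    · have ha := h2 p'.1 (fun h => hi h.symm)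
      have hb := h2' p.1 hi
      rw [h1'] at ha
      rw [h1] at hb
      exact absurd hb (lt_asymm ha)
  have hsub : P.biUnion C ⊆ lowSet d k := by
    intro w hw
    rcases Finset.mem_biUnion.mp hw with ⟨p, hpP, hpw⟩
    rcases (Finset.mem_filter.mp hpw).2 with ⟨h1, h2⟩
    have hodd : Odd p.1.1 := by
      have := (Finset.mem_product.mp hpP).1
      exact (Finset.mem_filter.mp this).2
    refine Finset.mem_filter.mpr ⟨Finset.mem_univ _, ⟨p.1, hodd, ?_⟩⟩
    intro j hj
    rw [h1]
    exact h2 j hj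
  have hcard : ∑ p ∈ P, (C p).card ≤ (lowSet d k).card := by
    rw [← Finset.card_biUnion hdisj]
    exact Finset.card_le_card hsub
  refine le_trans (le_of_eq ?_) hcard
  rw [hP, Finset.sum_product]
  have hinner : ∀ i : Fin k, ∑ q : Fin d, (C (i, q)).card
      = ∑ t ∈ Finset.range d, t ^ (k - 1) := by
    intro i
    have h1 : ∀ q : Fin d, (C (i, q)).card = (d - 1 - q.1) ^ (k - 1) := fun q => card_cell i q
    rw [Fintype.sum_congr _ _ h1]
    rw [Fin.sum_univ_eq_sum_range (fun t => (d - 1 - t) ^ (k - 1)) d]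
    exact Finset.sum_range_reflect (fun t => t ^ (k - 1)) d
  rw [Finset.sum_congr rfl (fun i _ => hinner i)]
  rw [Finset.sum_const, smul_eq_mul]
  congr 1
  have hcf : (Finset.univ.filter (fun i : Fin k => Odd i.1)).card
      = ((Finset.range k).filter (fun t => Odd t)).card := by
    rw [Finset.card_filter, Finset.card_filter]
    exact Fin.sum_univ_eq_sum_range (fun t => if Odd t then 1 else 0) k
  rw [hcf, odd_count]

end Aux

section Main

open Finset

lemma indep_ub {k : ℕ} (hk3 : 3 ≤ k) (hodd : Odd k) (d : ℕ) :
    2 * k * deBruijnIndep d k (Nat.le_of_succ_le hk3) ≤ (k - 1) * d ^ k := by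
  classical
  rw [deBruijnIndep]
  have hne : {n : ℕ | ∃ S : Finset (Fin k → Fin d),
      (∀ u ∈ S, ∀ v ∈ S, ¬ deBruijnAdj d k (Nat.le_of_succ_le hk3) u v) ∧ S.card = n}.Nonempty := by
    refine ⟨0, ∅, ?_, rfl⟩
    intro u hu
    exact absurd hu (Finset.notMem_empty u)
  have hb : ∀ n ∈ {n : ℕ | ∃ S : Finset (Fin k → Fin d),
      (∀ u ∈ S, ∀ v ∈ S, ¬ deBruijnAdj d k (Nat.le_of_succ_le hk3) u v) ∧ S.card = n},
      n ≤ ((k - 1) * d ^ k) / (2 * k) := by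
    rintro n ⟨S, hS, rfl⟩
    rw [Nat.le_div_iff_mul_le (by omega)]
    have h := indep_card_le hk3 hodd S hS
    calc S.card * (2 * k) = 2 * k * S.card := Nat.mul_comm _ _
      _ ≤ (k - 1) * d ^ k := h
  have h1 := csSup_le hne hb
  calc 2 * k * sSup _ ≤ 2 * k * (((k - 1) * d ^ k) / (2 * k)) :=
        Nat.mul_le_mul_left _ h1
    _ ≤ (k - 1) * d ^ k := by
        rw [Nat.mul_comm]
        exact Nat.div_mul_le_self _ _

lemma indep_lb {k : ℕ} (hk3 : 3 ≤ k) (hodd : Odd k) (d : ℕ) :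
    (k - 1) * (d - 1) ^ k ≤ 2 * k * deBruijnIndep d k (Nat.le_of_succ_le hk3) := by
  classical
  rw [deBruijnIndep]
  have hbdd : BddAbove {n : ℕ | ∃ S : Finset (Fin k → Fin d),
      (∀ u ∈ S, ∀ v ∈ S, ¬ deBruijnAdj d k (Nat.le_of_succ_le hk3) u v) ∧ S.card = n} := by
    refine ⟨d ^ k, ?_⟩
    rintro n ⟨S, _, rfl⟩
    calc S.card ≤ Fintype.card (Fin k → Fin d) := Finset.card_le_univ S
      _ = d ^ k := by rw [Fintype.card_fun, Fintype.card_fin, Fintype.card_fin]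
  have hmem : (lowSet d k).card ∈ {n : ℕ | ∃ S : Finset (Fin k → Fin d),
      (∀ u ∈ S, ∀ v ∈ S, ¬ deBruijnAdj d k (Nat.le_of_succ_le hk3) u v) ∧ S.card = n} :=
    ⟨lowSet d k, lowSet_indep hk3 hodd, rfl⟩
  have h1 : (lowSet d k).card ≤ sSup {n : ℕ | ∃ S : Finset (Fin k → Fin d),
      (∀ u ∈ S, ∀ v ∈ S, ¬ deBruijnAdj d k (Nat.le_of_succ_le hk3) u v) ∧ S.card = n} :=
    le_csSup hbdd hmem
  have h2 := lowSet_card_ge (d := d) hk3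
  have h3 := sum_pow_ge k (by omega) d
  have hkk : 2 * (k / 2) = k - 1 := by
    rcases hodd with ⟨m, hm⟩
    omega
  calc (k - 1) * (d - 1) ^ k ≤ (k - 1) * (k * ∑ t ∈ Finset.range d, t ^ (k - 1)) :=
        Nat.mul_le_mul_left _ h3
    _ = 2 * k * ((k / 2) * ∑ t ∈ Finset.range d, t ^ (k - 1)) := by
        rw [← hkk]; ring
    _ ≤ 2 * k * (lowSet d k).card := Nat.mul_le_mul_left _ h2
    _ ≤ 2 * k * sSup _ := Nat.mul_le_mul_left _ h1

end Main

/-- for odd `k ≥ 3`, `α(d,k)/d^k → (k-1)/(2k)` as `d → ∞`. -/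
theorem stmt_10 (k : ℕ) (hk : 3 ≤ k) (hodd : Odd k) :
    Tendsto (fun d : ℕ => (deBruijnIndep d k (by omega) : ℝ) / (d : ℝ) ^ k) atTop
      (nhds (((k : ℝ) - 1) / (2 * k))) := by
  have hkR : (0 : ℝ) < k := by
    have : (0 : ℕ) < k := by omega
    exact_mod_cast this
  -- the lower comparison function
  have hlim1 : Tendsto (fun d : ℕ => ((d : ℝ) - 1) / d) atTop (nhds 1) := by
    have h0 : Tendsto (fun d : ℕ => 1 - 1 / (d : ℝ)) atTop (nhds 1) := by
      have := tendsto_const_nhds (x := (1 : ℝ)) (f := atTop (α := ℕ))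
      have h2 := this.sub tendsto_one_div_atTop_nhds_zero_nat
      simpa using h2
    refine h0.congr' ?_
    filter_upwards [Filter.eventually_ge_atTop 1] with d hd
    have hd0 : (d : ℝ) ≠ 0 := by
      have : (0 : ℕ) < d := hd
      positivity
    field_simp
  have hlimL : Tendsto (fun d : ℕ => ((k : ℝ) - 1) / (2 * k) * (((d : ℝ) - 1) / d) ^ k)
      atTop (nhds (((k : ℝ) - 1) / (2 * k))) := by
    have h1 := (hlim1.pow k).const_mul (((k : ℝ) - 1) / (2 * k))
    simpa using h1
  refine tendsto_of_tendsto_of_tendsto_of_le_of_le' hlimL tendsto_const_nhds ?_ ?_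
  · -- lower bound, eventually
    filter_upwards [Filter.eventually_ge_atTop 1] with d hd
    have hd0 : (0 : ℝ) < (d : ℝ) := by exact_mod_cast hd
    have hdk : (0 : ℝ) < (d : ℝ) ^ k := by positivity
    have hL := indep_lb hk hodd d
    have hLR : ((k : ℝ) - 1) * ((d : ℝ) - 1) ^ k
        ≤ 2 * (k : ℝ) * (deBruijnIndep d k (by omega) : ℝ) := by
      have hcast : (((k - 1) * (d - 1) ^ k : ℕ) : ℝ)
          ≤ ((2 * k * deBruijnIndep d k (by omega) : ℕ) : ℝ) := by exact_mod_cast hL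
      push_cast [Nat.cast_sub (show 1 ≤ k by omega), Nat.cast_sub (show 1 ≤ d from hd)]
        at hcast
      convert hcast using 2
    rw [div_pow, div_mul_div_comm]
    rw [div_le_div_iff₀ (by positivity) hdk]
    have hα : (0 : ℝ) ≤ (deBruijnIndep d k (by omega) : ℝ) := Nat.cast_nonneg _
    nlinarith [hdk, hLR]
  · -- upper bound, eventually
    filter_upwards [Filter.eventually_ge_atTop 1] with d hd
    have hd0 : (0 : ℝ) < (d : ℝ) := by exact_mod_cast hd
    have hdk : (0 : ℝ) < (d : ℝ) ^ k := by positivity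
    have hU := indep_ub hk hodd d
    have hUR : 2 * (k : ℝ) * (deBruijnIndep d k (by omega) : ℝ)
        ≤ ((k : ℝ) - 1) * (d : ℝ) ^ k := by
      have hcast : ((2 * k * deBruijnIndep d k (by omega) : ℕ) : ℝ)
          ≤ (((k - 1) * d ^ k : ℕ) : ℝ) := by exact_mod_cast hU
      push_cast [Nat.cast_sub (show 1 ≤ k by omega)] at hcast
      convert hcast using 2
    rw [div_le_div_iff₀ hdk (by positivity)]
    nlinarith [hUR]
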